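/- Let v ∈ ℝ^n be a nonnegative vector, let n ≥ 1, and let Z be a symmetric matrix with Z_{ii} = 1 and Z_{ij} ≥ e^{-2L} for all i ≠ j (with L ≥ 0). Then the quadratic form Q(v) = Σ_{i,j} v_i v_j Z_{ij} satisfies Q(v) ≥ ((1 + (n-1) e^{-2L}) / n) · (Σ_i v_i)^2. -/

import Mathlib

/-!
Bound `Z` entrywise from below by the matrix with `d` on the diagonal and `c` off it; since `v ≥ 0`
this lowers the quadratic form to `c (∑ vᵢ)² + (d - c) ∑ vᵢ²`. When `c ≤ d`, Cauchy–Schwarz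
`(∑ vᵢ)² ≤ n ∑ vᵢ²` bounds the second term below by `(d - c) (∑ vᵢ)² / n`. Here `d = 1` and
`c = e^{-2L} ≤ 1`.
-/

open Finset

section QuadraticForm

variable {ι α : Type*} [Fintype ι] [DecidableEq ι]

theorem sum_sum_mul_const_add_diag [CommRing α] (v : ι → α) (c d : α) :
    ∑ i, ∑ j, v i * v j * (c + if i = j then d - c else 0) =
      c * (∑ i, v i) ^ 2 + (d - c) * ∑ i, v i ^ 2 := by
  simp only [mul_add, mul_ite, mul_zero, sum_add_distrib, sum_ite_eq, mem_univ, if_true,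
    ← sum_mul, ← mul_sum, sq]
  ring

theorem le_sum_sum_mul_of_le_diag_of_le_offDiag [CommRing α] [PartialOrder α]
    [IsOrderedRing α] {v : ι → α} (hv : ∀ i, 0 ≤ v i) {Z : Matrix ι ι α} {c d : α}
    (hdiag : ∀ i, d ≤ Z i i) (hoff : ∀ i j, i ≠ j → c ≤ Z i j) :
    c * (∑ i, v i) ^ 2 + (d - c) * ∑ i, v i ^ 2 ≤ ∑ i, ∑ j, v i * v j * Z i j := by
  rw [← sum_sum_mul_const_add_diag]
  gcongr with i _ j _
  · exact mul_nonneg (hv i) (hv j)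
  · split_ifs with hij
    · subst hij; simpa using hdiag i
    · simpa using hoff i j hij

end QuadraticForm

theorem div_card_mul_sq_sum_le_mul_sq_sum_add_mul_sum_sq {ι α : Type*} [Fintype ι] [Field α]
    [LinearOrder α] [IsStrictOrderedRing α] (v : ι → α) {c d : α} (hcd : c ≤ d) :
    (d + (Fintype.card ι - 1) * c) / Fintype.card ι * (∑ i, v i) ^ 2 ≤
      c * (∑ i, v i) ^ 2 + (d - c) * ∑ i, v i ^ 2 := by
  rcases isEmpty_or_nonempty ι with _ | _
  · simp
  have hcard : (0 : α) < Fintype.card ι := by exact_mod_cast Fintype.card_pos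
  have hCS : (∑ i, v i) ^ 2 / Fintype.card ι ≤ ∑ i, v i ^ 2 := by
    rw [div_le_iff₀' hcard]
    simpa using sq_sum_le_card_mul_sum_sq (s := univ) (f := v)
  calc (d + (Fintype.card ι - 1) * c) / Fintype.card ι * (∑ i, v i) ^ 2
      = c * (∑ i, v i) ^ 2 + (d - c) * ((∑ i, v i) ^ 2 / Fintype.card ι) := by
        field_simp
        ring
    _ ≤ c * (∑ i, v i) ^ 2 + (d - c) * ∑ i, v i ^ 2 := by gcongr

theorem quadratic_form_lower_bound_general
    (n : ℕ) (L : ℝ) (hL : 0 ≤ L)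
    (v : Fin n → ℝ) (hv : ∀ i, 0 ≤ v i)
    (Z : Matrix (Fin n) (Fin n) ℝ)
    (hdiag : ∀ i, Z i i = 1)
    (hoff : ∀ i j, i ≠ j → Real.exp (-2 * L) ≤ Z i j) :
    ((1 + (n - 1) * Real.exp (-2 * L)) / n) * (∑ i, v i) ^ 2 ≤
      ∑ i, ∑ j, v i * v j * Z i j := by
  have hexp : Real.exp (-2 * L) ≤ 1 := Real.exp_le_one_iff.mpr (by linarith)
  simpa using (div_card_mul_sq_sum_le_mul_sq_sum_add_mul_sum_sq v hexp).trans
    (le_sum_sum_mul_of_le_diag_of_le_offDiag hv (fun i => (hdiag i).ge) hoff)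

theorem quadratic_form_lower_bound
    (n : ℕ) (hn : 1 ≤ n) (L : ℝ) (hL : 0 ≤ L)
    (v : Fin n → ℝ) (hv : ∀ i, 0 ≤ v i)
    (Z : Matrix (Fin n) (Fin n) ℝ) (hsymm : Z.IsSymm)
    (hdiag : ∀ i, Z i i = 1)
    (hoff : ∀ i j, i ≠ j → Real.exp (-2 * L) ≤ Z i j) :
    ((1 + (n - 1) * Real.exp (-2 * L)) / n) * (∑ i, v i) ^ 2 ≤
      ∑ i, ∑ j, v i * v j * Z i j :=
  quadratic_form_lower_bound_general n L hL v hv Z hdiag hoff
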